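/- The word x y² x is an isoterm for the monoid M(ab²a, a²b²): if M(ab²a, a²b²) satisfies an identity xy²x ≈ v, then v = xy²x as words. -/

import Mathlib

open scoped Classical

def Fac (W : Set (List ℕ)) (u : List ℕ) : Prop := u = [] ∨ ∃ w ∈ W, u <:+: w

lemma Fac.of_infix {W : Set (List ℕ)} {u v : List ℕ} (h : Fac W u) (hv : v <:+: u) :
    Fac W v := by
  rcases h with rfl | ⟨w, hw, hu⟩
  · left; simpa using hv
  · exact Or.inr ⟨w, hw, hv.trans hu⟩

def MWord (W : Set (List ℕ)) : Type := Option {u : List ℕ // Fac W u}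

noncomputable def mwMul {W : Set (List ℕ)} : MWord W → MWord W → MWord W
  | some a, some b =>
      if h : Fac W (a.1 ++ b.1) then some ⟨a.1 ++ b.1, h⟩ else none
  | _, _ => none

lemma mwMul_none_left {W : Set (List ℕ)} (b : MWord W) : mwMul none b = none := by
  cases b <;> rfl

lemma mwMul_none_right {W : Set (List ℕ)} (a : MWord W) : mwMul a none = none := by
  cases a <;> rfl

lemma mwMul_some_some {W : Set (List ℕ)} (a b : {u : List ℕ // Fac W u}) :
    mwMul (some a) (some b) =
      if h : Fac W (a.1 ++ b.1) then some ⟨a.1 ++ b.1, h⟩ else none := rfl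

noncomputable instance MWord.monoid (W : Set (List ℕ)) : Monoid (MWord W) where
  mul := mwMul
  one := some ⟨[], Or.inl rfl⟩
  one_mul a := by
    show mwMul (some ⟨[], Or.inl rfl⟩) a = a
    cases a with
    | none => rfl
    | some a => exact dif_pos a.2
  mul_one a := by
    show mwMul a (some ⟨[], Or.inl rfl⟩) = a
    cases a with
    | none => rfl
    | some a =>
      have h : Fac W (a.1 ++ []) := by simpa using a.2
      rw [mwMul_some_some, dif_pos h]
      exact congrArg some (Subtype.ext (List.append_nil _))
  mul_assoc a b c := by
    show mwMul (mwMul a b) c = mwMul a (mwMul b c)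
    cases a with
    | none => exact (congrArg (mwMul · c) (mwMul_none_left b)).trans
                ((mwMul_none_left c).trans (mwMul_none_left _).symm)
    | some a =>
      cases b with
      | none => exact (congrArg (mwMul · c) (mwMul_none_right _)).trans ((mwMul_none_left c).trans
                  ((congrArg (mwMul (some a)) (mwMul_none_left c)).trans (mwMul_none_right _)).symm)
      | some b =>
        cases c with
        | none => exact (mwMul_none_right _).trans
                    ((congrArg (mwMul (some a)) (mwMul_none_right _)).trans (mwMul_none_right _)).symm
        | some c =>
          by_cases hab : Fac W (a.1 ++ b.1)
          · by_cases hbc : Fac W (b.1 ++ c.1)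
            · rw [mwMul_some_some b c, dif_pos hbc, mwMul_some_some a b, dif_pos hab,
                mwMul_some_some, mwMul_some_some]
              by_cases habc : Fac W (a.1 ++ b.1 ++ c.1)
              · have habc' : Fac W (a.1 ++ (b.1 ++ c.1)) := by
                  rwa [← List.append_assoc]
                rw [dif_pos habc, dif_pos habc']
                exact congrArg some (Subtype.ext (List.append_assoc _ _ _))
              · have habc' : ¬ Fac W (a.1 ++ (b.1 ++ c.1)) := by
                  rwa [← List.append_assoc]
                rw [dif_neg habc, dif_neg habc']
            · rw [mwMul_some_some b c, dif_neg hbc]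
              erw [mwMul_none_right]
              rw [
                mwMul_some_some a b, dif_pos hab, mwMul_some_some]
              have : ¬ Fac W (a.1 ++ b.1 ++ c.1) := fun h =>
                hbc (h.of_infix (by rw [List.append_assoc]; exact
                  (List.suffix_append a.1 (b.1 ++ c.1)).isInfix))
              rw [dif_neg this]
          · rw [mwMul_some_some a b, dif_neg hab]
            erw [mwMul_none_left]
            cases hc : mwMul (some b) (some c) with
            | none => exact (mwMul_none_right _).symm
            | some bc =>
              rw [mwMul_some_some]
              have hbc : bc.1 = b.1 ++ c.1 := by
                rw [mwMul_some_some] at hc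
                by_cases h : Fac W (b.1 ++ c.1)
                · rw [dif_pos h] at hc; cases hc; rfl
                · rw [dif_neg h] at hc; cases hc
              have : ¬ Fac W (a.1 ++ bc.1) := by
                rw [hbc]
                exact fun h => hab (h.of_infix (by
                  rw [← List.append_assoc]
                  exact (List.prefix_append (a.1 ++ b.1) c.1).isInfix))
              rw [dif_neg this]

def SatM (M : Type*) [Monoid M] (u v : List ℕ) : Prop :=
  ∀ f : ℕ → M, (u.map f).prod = (v.map f).prod

def IsIsoterm (M : Type*) [Monoid M] (w : List ℕ) : Prop :=
  ∀ v, SatM M w v → v = w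

namespace MWord

variable {W : Set (List ℕ)}

noncomputable def ofList (W : Set (List ℕ)) (u : List ℕ) : MWord W :=
  if h : Fac W u then some ⟨u, h⟩ else none

lemma ofList_of_fac {u : List ℕ} (h : Fac W u) : ofList W u = some ⟨u, h⟩ :=
  dif_pos h

lemma ofList_of_not_fac {u : List ℕ} (h : ¬ Fac W u) : ofList W u = none :=
  dif_neg h

lemma ofList_nil : ofList W [] = 1 :=
  ofList_of_fac (Or.inl rfl)

lemma ofList_append (u v : List ℕ) : ofList W (u ++ v) = ofList W u * ofList W v := by
  show ofList W (u ++ v) = mwMul (ofList W u) (ofList W v)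
  by_cases hu : Fac W u
  · by_cases hv : Fac W v
    · rw [ofList_of_fac hu, ofList_of_fac hv, mwMul_some_some]; rfl
    · have huv : ¬ Fac W (u ++ v) := fun h => hv (h.of_infix (List.suffix_append u v).isInfix)
      rw [ofList_of_not_fac hv, ofList_of_not_fac huv, mwMul_none_right]
  · have huv : ¬ Fac W (u ++ v) := fun h => hu (h.of_infix (List.prefix_append u v).isInfix)
    rw [ofList_of_not_fac hu, ofList_of_not_fac huv, mwMul_none_left]

lemma prod_map_ofList_singleton (u : List ℕ) :
    (u.map fun n => ofList W [n]).prod = ofList W u := by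
  induction u with
  | nil => exact ofList_nil.symm
  | cons n u ih => rw [List.map_cons, List.prod_cons, ih, ← ofList_append, List.singleton_append]

lemma eq_of_ofList_eq {u w : List ℕ} (hw : Fac W w) (h : ofList W u = ofList W w) : u = w := by
  by_cases hu : Fac W u
  · rw [ofList_of_fac hu, ofList_of_fac hw] at h
    exact congrArg Subtype.val (Option.some.inj h)
  · rw [ofList_of_not_fac hu, ofList_of_fac hw] at h
    cases h

end MWord

/-- Substitute for each variable the letter with the same code: the two sides become the
elements `w ≠ 0` and `v` of `M(W)`. -/
theorem Fac.isIsoterm {W : Set (List ℕ)} {w : List ℕ} (hw : Fac W w) : IsIsoterm (MWord W) w :=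
  fun v hsat => MWord.eq_of_ofList_eq hw <| by
    simpa only [MWord.prod_map_ofList_singleton] using (hsat fun n => MWord.ofList W [n]).symm

/-- Variables and letters are both coded by natural numbers: `x = a = 0`, `y = b = 1`. -/
theorem xyyx_isoterm (v : List ℕ)
    (hsat : SatM (MWord ({[0, 1, 1, 0], [0, 0, 1, 1]} : Set (List ℕ))) [0, 1, 1, 0] v) :
    v = [0, 1, 1, 0] :=
  Fac.isIsoterm (Or.inr ⟨[0, 1, 1, 0], by simp, List.infix_rfl⟩) v hsat
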